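/- arXiv:1512.00486 — 4 statements merged into one kernel-verified Lean document; each statement's English description precedes it below -/
import Mathlib

section
/- For γ > 1, the pointwise minimizer of the expected binary smooth hinge loss is α* = 1 - γ(1-p)/p if p ≥ γ/2; α* = 2p - 1 if 1 - γ/2 ≤ p ≤ γ/2; and α* = -1 + γ p/(1-p) if p < 1 - γ/2, and α* is a strictly monotonically increasing function of p on (0,1). -/
/-- The smooth hinge loss with smoothing parameter `γ`. -/
noncomputable def smoothHinge (γ α : ℝ) : ℝ :=
  if α < 1 - γ then 1 - α - γ / 2
  else if α ≤ 1 then (α - 1) ^ 2 / (2 * γ)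
  else 0

/-- Expected binary smooth hinge loss at conditional probability `p`. -/
noncomputable def smoothRisk (γ p α : ℝ) : ℝ :=
  p * smoothHinge γ α + (1 - p) * smoothHinge γ (-α)

/-- Bayes optimal score of the smooth hinge loss for `γ > 1`. -/
noncomputable def bayesScore2 (γ p : ℝ) : ℝ :=
  if γ / 2 ≤ p then 1 - γ * (1 - p) / p
  else if 1 - γ / 2 ≤ p then 2 * p - 1
  else -1 + γ * p / (1 - p)

/-! The risk `R(α) = p h(α) + (1 - p) h(-α)` of the convex, `C¹` smooth hinge loss `h` is
minimized wherever its derivative `p h'(α) - (1 - p) h'(-α)` vanishes, so it suffices to check this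
balance equation at the claimed score, piece by piece.  Monotonicity in `p` follows from the same
equation: `h'` is nondecreasing and negative on `(-∞, 1)`, so on `(-1, 1)` the ratio
`h'(-α) / h'(α)` is nondecreasing in `α`, while it equals `p / (1 - p)` at the minimizer. -/

noncomputable def smoothHingeDeriv (γ α : ℝ) : ℝ :=
  if α < 1 - γ then -1
  else if α ≤ 1 then (α - 1) / γ
  else 0

section SmoothHinge

variable {γ : ℝ}

lemma smoothHingeDeriv_of_le {α : ℝ} (hγ : 0 < γ) (h : α ≤ 1 - γ) :
    smoothHingeDeriv γ α = -1 := by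
  unfold smoothHingeDeriv
  rcases h.lt_or_eq with h | rfl
  · rw [if_pos h]
  · rw [if_neg (lt_irrefl _), if_pos (by linarith)]
    field_simp
    ring

lemma smoothHingeDeriv_of_mem_Icc {α : ℝ} (h₁ : 1 - γ ≤ α) (h₂ : α ≤ 1) :
    smoothHingeDeriv γ α = (α - 1) / γ := by
  rw [smoothHingeDeriv, if_neg h₁.not_gt, if_pos h₂]

lemma smoothHingeDeriv_neg_of_lt_one {α : ℝ} (hγ : 0 < γ) (h : α < 1) :
    smoothHingeDeriv γ α < 0 := by
  unfold smoothHingeDeriv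
  split_ifs
  · norm_num
  · exact div_neg_of_neg_of_pos (by linarith) hγ
  · linarith

lemma monotone_smoothHingeDeriv (hγ : 0 < γ) : Monotone (smoothHingeDeriv γ) := by
  intro a b hab
  unfold smoothHingeDeriv
  split_ifs <;> first
    | linarith
    | rw [le_div_iff₀ hγ]; linarith
    | rw [div_le_iff₀ hγ]; linarith
    | exact div_le_div_of_nonneg_right (by linarith) hγ.le

lemma smoothHinge_add_deriv_mul_le (hγ : 0 < γ) (α β : ℝ) :
    smoothHinge γ β + smoothHingeDeriv γ β * (α - β) ≤ smoothHinge γ α := by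
  unfold smoothHinge smoothHingeDeriv
  have h2γ : 0 < 2 * γ := by positivity
  split_ifs <;> first
    | nlinarith
    | rw [← sub_nonneg]; field_simp
      nlinarith [sq_nonneg (α - β), sq_nonneg (α + γ - 1), sq_nonneg (β + γ - 1)]

lemma smoothRisk_le_of_balance {p β : ℝ} (hγ : 0 < γ) (hp₀ : 0 ≤ p) (hp₁ : p ≤ 1)
    (hβ : p * smoothHingeDeriv γ β = (1 - p) * smoothHingeDeriv γ (-β)) (α : ℝ) :
    smoothRisk γ p β ≤ smoothRisk γ p α := by
  have h₁ := mul_le_mul_of_nonneg_left (smoothHinge_add_deriv_mul_le hγ α β) hp₀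
  have h₂ := mul_le_mul_of_nonneg_left (smoothHinge_add_deriv_mul_le hγ (-α) (-β))
    (sub_nonneg.2 hp₁)
  unfold smoothRisk
  linear_combination h₁ + h₂ - (α - β) * hβ

end SmoothHinge

lemma strictMonoOn_of_balance {d b : ℝ → ℝ} (hd : Monotone d) (hd_neg : ∀ x < 1, d x < 0)
    (hb : ∀ p ∈ Set.Ioo (0 : ℝ) 1, b p ∈ Set.Ioo (-1) 1 ∧ p * d (b p) = (1 - p) * d (-b p)) :
    StrictMonoOn b (Set.Ioo 0 1) := by
  intro p hp q hq hpq
  by_contra! hqp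
  obtain ⟨⟨hbp₁, hbp₂⟩, hp_bal⟩ := hb p hp
  obtain ⟨_, hq_bal⟩ := hb q hq
  have hdp : d (b p) < 0 := hd_neg _ hbp₂
  have hdp' : d (-b p) < 0 := hd_neg _ (by linarith)
  have hdq : d (b q) ≤ d (b p) := hd hqp
  have hdq' : d (-b p) ≤ d (-b q) := hd (neg_le_neg hqp)
  nlinarith [mul_lt_mul_of_neg_right hpq hdp, mul_lt_mul_of_neg_right hpq hdp',
    mul_le_mul_of_nonneg_left hdq hq.1.le, mul_le_mul_of_nonneg_left hdq' (sub_pos.2 hq.2).le]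

section BayesScore

variable {γ p : ℝ}

lemma mul_one_sub_div_mem_Ioc (hγ : 0 < γ) (hp : γ / 2 ≤ p) (hp₁ : p < 1) :
    γ * (1 - p) / p ∈ Set.Ioc 0 (2 - γ) := by
  have hp₀ : 0 < p := by linarith
  exact ⟨by apply div_pos <;> nlinarith, by rw [div_le_iff₀ hp₀]; nlinarith⟩

lemma mul_div_one_sub_mem_Ioc (hγ : 0 < γ) (hp : p ≤ 1 - γ / 2) (hp₀ : 0 < p) :
    γ * p / (1 - p) ∈ Set.Ioc 0 (2 - γ) := by
  simpa using mul_one_sub_div_mem_Ioc hγ (p := 1 - p) (by linarith) (by linarith)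

lemma bayesScore2_mem_Ioo (hγ : 1 < γ) (hp : p ∈ Set.Ioo (0 : ℝ) 1) :
    bayesScore2 γ p ∈ Set.Ioo (-1) 1 := by
  obtain ⟨hp₀, hp₁⟩ := hp
  have hγ₀ : 0 < γ := by linarith
  unfold bayesScore2
  split_ifs with h₁ h₂
  · obtain ⟨hs₀, hs⟩ := mul_one_sub_div_mem_Ioc hγ₀ h₁ hp₁
    constructor <;> linarith
  · constructor <;> linarith
  · obtain ⟨hs₀, hs⟩ := mul_div_one_sub_mem_Ioc hγ₀ (by linarith) hp₀
    constructor <;> linarith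

lemma bayesScore2_balance (hγ : 1 < γ) (hp : p ∈ Set.Ioo (0 : ℝ) 1) :
    p * smoothHingeDeriv γ (bayesScore2 γ p) =
      (1 - p) * smoothHingeDeriv γ (-bayesScore2 γ p) := by
  obtain ⟨hp₀, hp₁⟩ := hp
  have hγ₀ : 0 < γ := by linarith
  unfold bayesScore2
  split_ifs with h₁ h₂
  · obtain ⟨hs₀, hs⟩ := mul_one_sub_div_mem_Ioc hγ₀ h₁ hp₁
    rw [smoothHingeDeriv_of_mem_Icc (by linarith) (by linarith),
      smoothHingeDeriv_of_le hγ₀ (by linarith)]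
    field_simp
    ring
  · rw [smoothHingeDeriv_of_mem_Icc (by linarith) (by linarith),
      smoothHingeDeriv_of_mem_Icc (by linarith) (by linarith)]
    ring
  · obtain ⟨hs₀, hs⟩ := mul_div_one_sub_mem_Ioc hγ₀ (by linarith) hp₀
    rw [smoothHingeDeriv_of_le hγ₀ (by linarith),
      smoothHingeDeriv_of_mem_Icc (by linarith) (by linarith)]
    field_simp
    ring

end BayesScore

/-- For `γ > 1`, the pointwise minimizer of the expected binary smooth hinge
loss is given piecewise by `1 - γ(1-p)/p` for `p ≥ γ/2`, `2p - 1` for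
`1 - γ/2 ≤ p ≤ γ/2`, and `-1 + γ p/(1-p)` for `p < 1 - γ/2`, and it is a
strictly monotonically increasing function of `p` on `(0,1)`. -/
theorem stmt10 (γ : ℝ) (hγ : 1 < γ) :
    (∀ p ∈ Set.Ioo (0 : ℝ) 1, ∀ α : ℝ,
        smoothRisk γ p (bayesScore2 γ p) ≤ smoothRisk γ p α) ∧
    StrictMonoOn (bayesScore2 γ) (Set.Ioo 0 1) := by
  have hγ₀ : 0 < γ := by linarith
  refine ⟨fun p hp ↦ smoothRisk_le_of_balance hγ₀ hp.1.le hp.2.le (bayesScore2_balance hγ hp), ?_⟩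
  exact strictMonoOn_of_balance (monotone_smoothHingeDeriv hγ₀)
    (fun _ ↦ smoothHingeDeriv_neg_of_lt_one hγ₀)
    (fun p hp ↦ ⟨bayesScore2_mem_Ioo hγ hp, bayesScore2_balance hγ hp⟩)
end

section
/- The convex conjugate of the softmax loss L(u) = log(sum_{j=1}^m exp(u_j - u_y)) (as a function of u ∈ R^m for fixed label y) is L*(v) = sum_{j ≠ y} v_j log v_j + (1 + v_y) log(1 + v_y) if ⟨1, v⟩ = 0 and the vector (v_j)_{j≠y} lies in the set Δ = {x : ⟨1,x⟩ ≤ 1, 0 ≤ x_j ≤ 1 for all j}, and L*(v) = +∞ otherwise. -/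
/-!
Since `log ∑ exp (u j - u y) = log ∑ exp u - u y`, the objective at `v` is the Fenchel objective
`⟪u, p⟫ - log ∑ exp u` of log-sum-exp at `p = v + e_y`. The conjugate of log-sum-exp is the
negative entropy `∑ p log p` on the probability simplex and `+∞` off it: the upper bound is Gibbs'
inequality, approached along `u = log (p + δ)` as `δ → 0`; off the simplex the objective is
unbounded along one of the rays `u = t • 1`, `u = -t • 1`, `u = -t • e_j`. Finally, the conditions
on `v` say exactly that `v + e_y` lies in the simplex.
-/

open Finset Real Filter

namespace EReal

variable {α : Type*}

lemma iSup_coe_eq_top_of_forall_exists_le {f : α → ℝ} (h : ∀ M, ∃ x, M ≤ f x) :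
    ⨆ x, (f x : EReal) = ⊤ := by
  refine (eq_top_iff_forall_lt _).2 fun M => ?_
  obtain ⟨x, hx⟩ := h (M + 1)
  exact (EReal.coe_lt_coe_iff.2 (by linarith)).trans_le (le_iSup (fun x => (f x : EReal)) x)

lemma coe_le_iSup_coe_of_forall_pos {f : α → ℝ} {a : ℝ} (h : ∀ ε > 0, ∃ x, a - ε ≤ f x) :
    (a : EReal) ≤ ⨆ x, (f x : EReal) := by
  refine le_of_forall_lt_iff_le.1 fun z hz => EReal.coe_le_coe_iff.2 ?_
  refine le_of_forall_pos_lt_add fun ε hε => ?_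
  obtain ⟨x, hx⟩ := h ε hε
  have : (f x : EReal) < z := (le_iSup (fun x => (f x : EReal)) x).trans_lt hz
  linarith [EReal.coe_lt_coe_iff.1 this]

end EReal

lemma Real.mul_log_sub_mul_log_le {p q : ℝ} (hp : 0 ≤ p) (hq : 0 < q) :
    p * log q - p * log p ≤ q - p := by
  rcases hp.eq_or_lt with rfl | hp
  · simpa using hq.le
  calc p * log q - p * log p = p * log (q / p) := by
        rw [log_div hq.ne' hp.ne']; ring
    _ ≤ p * (q / p - 1) := by gcongr; exact log_le_sub_one_of_pos (div_pos hq hp)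
    _ = q - p := by field_simp

section LogSumExp

variable {ι : Type*} [Fintype ι]

lemma Real.log_sum_exp_le [Nonempty ι] {u : ι → ℝ} {A : ℝ} (h : ∀ i, u i ≤ A) :
    log (∑ i, exp (u i)) ≤ log (Fintype.card ι) + A := by
  calc log (∑ i, exp (u i)) ≤ log (∑ _i : ι, exp A) :=
        log_le_log (sum_pos (fun i _ => exp_pos _) univ_nonempty)
          (sum_le_sum fun i _ => exp_le_exp.2 (h i))
    _ = log (Fintype.card ι) + A := by
        rw [sum_const, card_univ, nsmul_eq_mul, log_mul (by positivity) (exp_ne_zero _), log_exp]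

lemma Real.log_sum_exp_sub [Nonempty ι] (u : ι → ℝ) (c : ℝ) :
    log (∑ i, exp (u i - c)) = log (∑ i, exp (u i)) - c := by
  simp_rw [exp_sub, ← sum_div]
  rw [log_div (sum_pos (fun i _ => exp_pos _) univ_nonempty).ne' (exp_ne_zero _), log_exp]

lemma Real.sum_mul_sub_sum_mul_log_le_log_sum_exp {p : ι → ℝ} (hp : ∀ i, 0 ≤ p i)
    (hp₁ : ∑ i, p i = 1) (w : ι → ℝ) :
    ∑ i, w i * p i - ∑ i, p i * log (p i) ≤ log (∑ i, exp (w i)) := by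
  have : Nonempty ι := (nonempty_of_sum_ne_zero (hp₁ ▸ one_ne_zero)).to_type
  set Z := ∑ i, exp (w i)
  have hZ : 0 < Z := sum_pos (fun i _ => exp_pos _) univ_nonempty
  have term : ∀ i, p i * (w i - log Z) - p i * log (p i) ≤ exp (w i) / Z - p i := fun i => by
    simpa only [log_div (exp_ne_zero _) hZ.ne', log_exp] using
      mul_log_sub_mul_log_le (hp i) (div_pos (exp_pos (w i)) hZ)
  have hlhs : ∑ i, (p i * (w i - log Z) - p i * log (p i)) =
      ∑ i, w i * p i - ∑ i, p i * log (p i) - log Z := by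
    simp only [mul_sub, sum_sub_distrib, ← sum_mul, hp₁, mul_comm (p _) (w _)]
    ring
  have hrhs : ∑ i, (exp (w i) / Z - p i) = 0 := by
    rw [sum_sub_distrib, ← sum_div, div_self hZ.ne', hp₁, sub_self]
  linarith [sum_le_sum fun i (_ : i ∈ univ) => term i]

lemma Real.sum_mul_log_sub_le_sum_log_add_mul_sub_log_sum_exp {p : ι → ℝ} (hp : ∀ i, 0 ≤ p i)
    (hp₁ : ∑ i, p i = 1) {δ : ℝ} (hδ : 0 < δ) :
    ∑ i, p i * log (p i) - log (1 + Fintype.card ι * δ) ≤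
      ∑ i, log (p i + δ) * p i - log (∑ i, exp (log (p i + δ))) := by
  have hpos : ∀ i, 0 < p i + δ := fun i => add_pos_of_nonneg_of_pos (hp i) hδ
  have hsum : ∑ i, exp (log (p i + δ)) = 1 + Fintype.card ι * δ := by
    simp_rw [exp_log (hpos _), sum_add_distrib, hp₁, sum_const, card_univ, nsmul_eq_mul]
  rw [hsum]
  gcongr ?_ - _
  refine sum_le_sum fun i _ => ?_
  rw [mul_comm]
  rcases (hp i).eq_or_lt with h | h
  · simp [← h]
  · gcongr; linarith

lemma Real.exists_le_sum_mul_sub_log_sum_exp [Nonempty ι] {p d : ι → ℝ} {A : ℝ}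
    (hd : ∀ i, d i ≤ A) (hA : A < ∑ i, d i * p i) (M : ℝ) :
    ∃ u : ι → ℝ, M ≤ ∑ i, u i * p i - log (∑ i, exp (u i)) := by
  obtain ⟨t, ht₀, ht⟩ := ((eventually_ge_atTop 0).and
    ((tendsto_id.atTop_mul_const (sub_pos.2 hA)).eventually_ge_atTop
      (M + log (Fintype.card ι)))).exists
  refine ⟨fun i => t * d i, ?_⟩
  have hlog := log_sum_exp_le fun i => mul_le_mul_of_nonneg_left (hd i) ht₀
  simp only [id, mul_sub] at ht
  simp only [mul_assoc, ← mul_sum]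
  linarith

theorem Real.iSup_sum_mul_sub_log_sum_exp [Nonempty ι] (p : ι → ℝ) :
    ⨆ u : ι → ℝ, ((∑ i, u i * p i - log (∑ i, exp (u i)) : ℝ) : EReal) =
      if (∀ i, 0 ≤ p i) ∧ ∑ i, p i = 1 then ((∑ i, p i * log (p i) : ℝ) : EReal) else ⊤ := by
  split_ifs with hp
  · obtain ⟨hp₀, hp₁⟩ := hp
    refine le_antisymm (iSup_le fun u => EReal.coe_le_coe_iff.2 ?_) ?_
    · linarith [sum_mul_sub_sum_mul_log_le_log_sum_exp hp₀ hp₁ u]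
    refine EReal.coe_le_iSup_coe_of_forall_pos fun ε hε =>
      ⟨fun i => log (p i + ε / Fintype.card ι), ?_⟩
    have hcard : (0 : ℝ) < Fintype.card ι := Nat.cast_pos.2 Fintype.card_pos
    have hlog : log (1 + Fintype.card ι * (ε / Fintype.card ι)) ≤ ε := by
      rw [mul_div_cancel₀ _ hcard.ne']
      linarith [log_le_sub_one_of_pos (by linarith : (0 : ℝ) < 1 + ε)]
    linarith [sum_mul_log_sub_le_sum_log_add_mul_sub_log_sum_exp hp₀ hp₁ (div_pos hε hcard)]
  · refine EReal.iSup_coe_eq_top_of_forall_exists_le fun M => ?_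
    simp only [not_and_or, not_forall, not_le] at hp
    rcases hp with ⟨j, hj⟩ | hp₁
    · classical
      refine exists_le_sum_mul_sub_log_sum_exp (d := -Pi.single j 1) (A := 0) (fun i => ?_) ?_ M
      · by_cases hi : i = j <;> simp [hi]
      · simpa [Pi.single_apply] using hj
    rcases lt_or_gt_of_ne hp₁ with h | h
    · exact exists_le_sum_mul_sub_log_sum_exp (d := fun _ => -1) (A := -1) (fun _ => le_rfl)
        (by simp only [neg_one_mul, sum_neg_distrib]; linarith) M
    · exact exists_le_sum_mul_sub_log_sum_exp (d := fun _ => 1) (A := 1) (fun _ => le_rfl)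
        (by simpa using h) M

end LogSumExp

section Softmax

variable {ι : Type*} [Fintype ι] [DecidableEq ι]

lemma sum_mul_sub_log_sum_exp_sub_apply (u v : ι → ℝ) (y : ι) :
    ∑ j, u j * v j - log (∑ j, exp (u j - u y)) =
      ∑ j, u j * (v + Pi.single y 1 : ι → ℝ) j - log (∑ j, exp (u j)) := by
  have : Nonempty ι := ⟨y⟩
  simp only [log_sum_exp_sub, Pi.add_apply, Pi.single_apply, mul_add, mul_ite, mul_one, mul_zero,
    sum_add_distrib, sum_ite_eq', mem_univ, if_true]
  ring

lemma add_single_nonneg_and_sum_eq_one_iff (v : ι → ℝ) (y : ι) :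
    ((∀ i, 0 ≤ (v + Pi.single y 1 : ι → ℝ) i) ∧ ∑ i, (v + Pi.single y 1 : ι → ℝ) i = 1) ↔
      (∑ j, v j = 0) ∧ (∑ j ∈ univ.erase y, v j ≤ 1) ∧ (∀ j, j ≠ y → 0 ≤ v j ∧ v j ≤ 1) := by
  have hsum : ∑ i, (v + Pi.single y 1 : ι → ℝ) i = ∑ i, v i + 1 := by simp [sum_add_distrib]
  have hsplit : v y + ∑ j ∈ univ.erase y, v j = ∑ j, v j := add_sum_erase _ _ (mem_univ y)
  constructor
  · rintro ⟨h₀, h₁⟩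
    have hy : 0 ≤ v y + 1 := by simpa using h₀ y
    have hj : ∀ j ≠ y, 0 ≤ v j := fun j hj => by simpa [hj] using h₀ j
    have herase : ∑ j ∈ univ.erase y, v j ≤ 1 := by linarith
    refine ⟨by linarith, herase, fun j hjy => ⟨hj j hjy, ?_⟩⟩
    exact (single_le_sum (fun i hi => hj i (ne_of_mem_erase hi))
      (mem_erase.2 ⟨hjy, mem_univ j⟩)).trans herase
  · rintro ⟨hv, herase, hj⟩
    refine ⟨fun i => ?_, by linarith⟩
    by_cases hi : i = y
    · subst hi
      simp only [Pi.add_apply, Pi.single_eq_same]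
      linarith
    · simpa [hi] using (hj i hi).1

lemma sum_add_single_mul_log (v : ι → ℝ) (y : ι) :
    ∑ i, (v + Pi.single y 1 : ι → ℝ) i * log ((v + Pi.single y 1 : ι → ℝ) i) =
      ∑ j ∈ univ.erase y, v j * log (v j) + (1 + v y) * log (1 + v y) := by
  rw [← sum_erase_add _ _ (mem_univ y)]
  congr 1
  · exact sum_congr rfl fun j hj => by simp [ne_of_mem_erase hj]
  · simp [add_comm]

end Softmax

/-- The convex conjugate of the softmax loss `u ↦ log (∑ j exp (u j - u y))`
is `v ↦ ∑_{j ≠ y} v j log (v j) + (1 + v y) log (1 + v y)` if `⟨1, v⟩ = 0` and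
`(v j)_{j ≠ y}` lies in `Δ = {x : ⟨1,x⟩ ≤ 1, 0 ≤ x j ≤ 1}`, and `+∞`
otherwise. -/
theorem stmt11 (m : ℕ) (y : Fin m) (v : Fin m → ℝ) :
    (⨆ u : Fin m → ℝ,
        ((∑ j, u j * v j - Real.log (∑ j, Real.exp (u j - u y)) : ℝ) : EReal)) =
      if (∑ j, v j = 0) ∧ (∑ j ∈ Finset.univ.erase y, v j ≤ 1) ∧
          (∀ j, j ≠ y → 0 ≤ v j ∧ v j ≤ 1) then
        (((∑ j ∈ Finset.univ.erase y, v j * Real.log (v j))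
            + (1 + v y) * Real.log (1 + v y) : ℝ) : EReal)
      else ⊤ := by
  have : Nonempty (Fin m) := ⟨y⟩
  simp_rw [sum_mul_sub_log_sum_exp_sub_apply _ v y, iSup_sum_mul_sub_log_sum_exp,
    sum_add_single_mul_log]
  exact if_congr (add_single_nonneg_and_sum_eq_one_iff v y) rfl rfl
end

section
/- Let γ > 0 and let L*_γ(b) = (γ/2)⟨b,b⟩ - ⟨c,b⟩ for b in the top-k simplex Δ^α_k = {x : ⟨1,x⟩ ≤ 1, 0 ≤ x_i ≤ (1/k)⟨1,x⟩} and +∞ otherwise. Then its convex conjugate is L_γ(a) = (1/γ)( ⟨a+c, p⟩ - (1/2)⟨p,p⟩ ), where p is the Euclidean projection of a+c onto the scaled top-k simplex Δ^α_k(γ) = {x : ⟨1,x⟩ ≤ γ, 0 ≤ x_i ≤ (1/k)⟨1,x⟩}. -/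
open Finset

/-- The convex conjugate of `L*_γ(b) = (γ/2)⟨b,b⟩ - ⟨c,b⟩` restricted to the
top-`k` simplex `Δ^α_k = {x : ⟨1,x⟩ ≤ 1, 0 ≤ x i ≤ (1/k)⟨1,x⟩}` is the smooth
top-`k` hinge loss `L_γ(a) = (1/γ)(⟨a+c,p⟩ - (1/2)⟨p,p⟩)`, where `p` is the
Euclidean projection of `a + c` onto the scaled top-`k` simplex `Δ^α_k(γ)`;
moreover the supremum defining the conjugate is attained. -/
theorem stmt17 (m k : ℕ) (hk : 0 < k) (γ : ℝ) (hγ : 0 < γ)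
    (c a p : Fin m → ℝ)
    (hpmem : (∑ i, p i ≤ γ) ∧ ∀ i, 0 ≤ p i ∧ p i ≤ (1 / (k : ℝ)) * ∑ j, p j)
    (hproj : ∀ z : Fin m → ℝ,
      ((∑ i, z i ≤ γ) ∧ ∀ i, 0 ≤ z i ∧ z i ≤ (1 / (k : ℝ)) * ∑ j, z j) →
      ∑ i, (a i + c i - p i) ^ 2 ≤ ∑ i, (a i + c i - z i) ^ 2) :
    IsGreatest {r : ℝ | ∃ b : Fin m → ℝ,
        ((∑ i, b i ≤ 1) ∧ ∀ i, 0 ≤ b i ∧ b i ≤ (1 / (k : ℝ)) * ∑ j, b j) ∧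
        r = ∑ i, a i * b i - (γ / 2 * ∑ i, b i * b i - ∑ i, c i * b i)}
      ((1 / γ) * (∑ i, (a i + c i) * p i - (1 / 2) * ∑ i, p i * p i)) := by
  have hγ' : γ ≠ 0 := ne_of_gt hγ
  have expand : ∀ z : Fin m → ℝ, ∑ i, (a i + c i - z i) ^ 2
      = ∑ i, (a i + c i) ^ 2 - 2 * ∑ i, (a i + c i) * z i + ∑ i, z i * z i := by
    intro z
    rw [Finset.mul_sum, ← Finset.sum_sub_distrib, ← Finset.sum_add_distrib]
    exact Finset.sum_congr rfl fun i _ => by ring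
  constructor
  · refine ⟨fun i => p i / γ, ⟨?_, fun i => ⟨?_, ?_⟩⟩, ?_⟩
    · rw [← Finset.sum_div, div_le_one hγ]; exact hpmem.1
    · exact div_nonneg (hpmem.2 i).1 hγ.le
    · calc p i / γ ≤ (1 / (k : ℝ) * ∑ j, p j) / γ := by
            gcongr
            exact (hpmem.2 i).2
        _ = 1 / (k : ℝ) * ((∑ j, p j) / γ) := by ring
        _ = 1 / (k : ℝ) * ∑ j, p j / γ := by rw [Finset.sum_div]
    · have h1 : ∑ i, a i * (p i / γ) = (∑ i, a i * p i) / γ := by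
        rw [Finset.sum_div]; exact Finset.sum_congr rfl fun i _ => by ring
      have h2 : ∑ i, c i * (p i / γ) = (∑ i, c i * p i) / γ := by
        rw [Finset.sum_div]; exact Finset.sum_congr rfl fun i _ => by ring
      have h3 : ∑ i, (p i / γ) * (p i / γ) = (∑ i, p i * p i) / γ ^ 2 := by
        rw [Finset.sum_div]; exact Finset.sum_congr rfl fun i _ => by ring
      have h4 : ∑ i, (a i + c i) * p i = ∑ i, a i * p i + ∑ i, c i * p i := by
        rw [← Finset.sum_add_distrib]; exact Finset.sum_congr rfl fun i _ => by ring
      rw [h1, h2, h3, h4]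
      field_simp
      ring
  · rintro r ⟨b, ⟨hb1, hb2⟩, rfl⟩
    set z : Fin m → ℝ := fun i => γ * b i with hz
    have hzmem : (∑ i, z i ≤ γ) ∧ ∀ i, 0 ≤ z i ∧ z i ≤ (1 / (k : ℝ)) * ∑ j, z j := by
      refine ⟨?_, fun i => ⟨mul_nonneg hγ.le (hb2 i).1, ?_⟩⟩
      · rw [← Finset.mul_sum]
        calc γ * ∑ i, b i ≤ γ * 1 := by
              exact mul_le_mul_of_nonneg_left hb1 hγ.le
          _ = γ := mul_one γ
      · have := (hb2 i).2
        rw [← Finset.mul_sum]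
        calc γ * b i ≤ γ * ((1 / (k : ℝ)) * ∑ j, b j) :=
              mul_le_mul_of_nonneg_left this hγ.le
          _ = (1 / (k : ℝ)) * (γ * ∑ j, b j) := by ring
    have key := hproj z hzmem
    rw [expand p, expand z] at key
    have hzdot : ∑ i, (a i + c i) * z i = γ * ∑ i, (a i + c i) * b i := by
      rw [Finset.mul_sum]; exact Finset.sum_congr rfl fun i _ => by simp only [hz]; ring
    have hzz : ∑ i, z i * z i = γ ^ 2 * ∑ i, b i * b i := by
      rw [Finset.mul_sum]; exact Finset.sum_congr rfl fun i _ => by simp only [hz]; ring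
    have hsplit : ∑ i, (a i + c i) * b i = ∑ i, a i * b i + ∑ i, c i * b i := by
      rw [← Finset.sum_add_distrib]; exact Finset.sum_congr rfl fun i _ => by ring
    rw [hzdot, hzz, hsplit] at key
    rw [show (1 / γ) * (∑ i, (a i + c i) * p i - (1 / 2) * ∑ i, p i * p i)
        = (∑ i, (a i + c i) * p i - (1 / 2) * ∑ i, p i * p i) / γ by ring,
      le_div_iff₀ hγ]
    nlinarith [key]
end

section
/- The smooth top-k hinge loss L_γ, being the convex conjugate of a γ-strongly convex function, is differentiable with (1/γ)-Lipschitz gradient, and its gradient is ∇L_γ(a) = (1/γ)·proj_{Δ^α_k(γ)}(a + c), the scaled Euclidean projection of a+c onto the top-k simplex of radius γ. -/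
/-!
For a set `C` with metric projection `P`, the potential `φ z = ⟪z, P z⟫ - ½‖P z‖²` is the convex
conjugate of `½‖·‖² + ι_C`, the supremum defining it being attained at `P z`. Testing the
supremum at `w` with the competitor `P z`, and at `z` with `P w`, squeezes
`φ w - φ z - ⟪P z, w - z⟫` between `0` and `⟪P w - P z, w - z⟫ ≤ ‖w - z‖²`, the last step because
the projection onto a convex set is nonexpansive. This quadratic bound gives `∇φ = P` and passes
to `L_γ = γ⁻¹ φ(· + c)`.
-/

open Asymptotics Filter RealInnerProductSpace

theorem convex_topKSimplex {ι : Type*} [Fintype ι] (γ t : ℝ) :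
    Convex ℝ {x : EuclideanSpace ℝ ι |
      (∑ i, x i ≤ γ) ∧ ∀ i, 0 ≤ x i ∧ x i ≤ t * ∑ j, x j} := by
  rintro x ⟨hx_sum, hx⟩ y ⟨hy_sum, hy⟩ a b ha hb hab
  have hsum : ∑ i, (a • x + b • y) i = a * ∑ i, x i + b * ∑ i, y i := by
    simp [Finset.sum_add_distrib, Finset.mul_sum]
  have hcoord (i) : (a • x + b • y) i = a * x i + b * y i := rfl
  refine ⟨?_, fun i => ⟨?_, ?_⟩⟩
  · calc _ = a * ∑ i, x i + b * ∑ i, y i := hsum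
      _ ≤ a * γ + b * γ := by gcongr
      _ = γ := by rw [← add_mul, hab, one_mul]
  · rw [hcoord]
    have := (hx i).1
    have := (hy i).1
    positivity
  · rw [hcoord, hsum]
    linarith [mul_le_mul_of_nonneg_left (hx i).2 ha, mul_le_mul_of_nonneg_left (hy i).2 hb]

theorem hasGradientAt_of_abs_sub_sub_inner_le {F : Type*} [NormedAddCommGroup F]
    [InnerProductSpace ℝ F] [CompleteSpace F] {f : F → ℝ} {g x : F} (K : ℝ)
    (h : ∀ y, |f y - f x - ⟪g, y - x⟫| ≤ K * ‖y - x‖ ^ 2) : HasGradientAt f g x := by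
  rw [hasGradientAt_iff_isLittleO]
  refine IsBigO.trans_isLittleO ?_ (isLittleO_pow_sub_sub x one_lt_two)
  refine IsBigO.of_bound K (Eventually.of_forall fun y => ?_)
  simpa [abs_of_nonneg (sq_nonneg ‖y - x‖)] using h y

section MetricProjection

variable {F : Type*} [NormedAddCommGroup F] [InnerProductSpace ℝ F]

def IsMetricProjection (C : Set F) (P : F → F) : Prop :=
  ∀ z, P z ∈ C ∧ ∀ w ∈ C, dist z (P z) ≤ dist z w

/-- Equals `½‖z‖² - ½ dist(z, C)²` when `P` is the metric projection onto `C`. -/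
noncomputable def projPotential (P : F → F) (z : F) : ℝ :=
  ⟪z, P z⟫ - 1 / 2 * ⟪P z, P z⟫

namespace IsMetricProjection

variable {C : Set F} {P : F → F}

theorem inner_sub_le_zero (hP : IsMetricProjection C P) (hC : Convex ℝ C) (z : F) {w : F}
    (hw : w ∈ C) : ⟪z - P z, w - P z⟫ ≤ 0 := by
  obtain ⟨hzC, hzmin⟩ := hP z
  refine (norm_eq_iInf_iff_real_inner_le_zero hC hzC).mp ?_ w hw
  have : Nonempty C := ⟨⟨P z, hzC⟩⟩
  refine le_antisymm (le_ciInf fun v => ?_) (ciInf_le (f := fun v : C => ‖z - v‖)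
    ⟨0, Set.forall_mem_range.2 fun _ => norm_nonneg _⟩ ⟨P z, hzC⟩)
  simpa [dist_eq_norm] using hzmin v v.2

theorem sq_norm_sub_le_inner (hP : IsMetricProjection C P) (hC : Convex ℝ C) (z w : F) :
    ‖P w - P z‖ ^ 2 ≤ ⟪w - z, P w - P z⟫ := by
  have hz := hP.inner_sub_le_zero hC z (hP w).1
  have hw := hP.inner_sub_le_zero hC w (hP z).1
  rw [← real_inner_self_eq_norm_sq]
  have : ⟪w - z, P w - P z⟫ - ⟪P w - P z, P w - P z⟫ =
      -⟪z - P z, P w - P z⟫ - ⟪w - P w, P z - P w⟫ := by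
    simp only [inner_sub_left, inner_sub_right, real_inner_comm]
    ring
  linarith

theorem lipschitzWith_one (hP : IsMetricProjection C P) (hC : Convex ℝ C) :
    LipschitzWith 1 P := by
  refine LipschitzWith.of_dist_le_mul fun w z => ?_
  rw [NNReal.coe_one, one_mul, dist_eq_norm, dist_eq_norm]
  have h : ‖P w - P z‖ * ‖P w - P z‖ ≤ ‖w - z‖ * ‖P w - P z‖ := by
    rw [← sq]
    exact (hP.sq_norm_sub_le_inner hC z w).trans (real_inner_le_norm _ _)
  rcases (norm_nonneg (P w - P z)).eq_or_lt with h0 | h0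
  · rw [← h0]
    exact norm_nonneg _
  · exact le_of_mul_le_mul_right h h0

theorem inner_sub_half_inner_le_projPotential (hP : IsMetricProjection C P) (z : F) {q : F}
    (hq : q ∈ C) : ⟪z, q⟫ - 1 / 2 * ⟪q, q⟫ ≤ projPotential P z := by
  have h := (hP z).2 q hq
  rw [dist_eq_norm, dist_eq_norm] at h
  have hsq := pow_le_pow_left₀ (norm_nonneg _) h 2
  rw [← real_inner_self_eq_norm_sq, ← real_inner_self_eq_norm_sq] at hsq
  simp only [inner_sub_left, inner_sub_right, real_inner_comm z] at hsq
  unfold projPotential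
  linarith

theorem abs_projPotential_sub_sub_inner_le (hP : IsMetricProjection C P) (hC : Convex ℝ C)
    (z w : F) : |projPotential P w - projPotential P z - ⟪P z, w - z⟫| ≤ ‖w - z‖ ^ 2 := by
  have hw := hP.inner_sub_half_inner_le_projPotential w (hP z).1
  have hz := hP.inner_sub_half_inner_le_projPotential z (hP w).1
  have hlip : ⟪P w - P z, w - z⟫ ≤ ‖w - z‖ ^ 2 :=
    calc ⟪P w - P z, w - z⟫ ≤ ‖P w - P z‖ * ‖w - z‖ := real_inner_le_norm _ _
      _ ≤ 1 * ‖w - z‖ * ‖w - z‖ := by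
        gcongr
        exact (hP.lipschitzWith_one hC).norm_sub_le w z
      _ = ‖w - z‖ ^ 2 := by ring
  unfold projPotential at hw hz ⊢
  simp only [inner_sub_right, real_inner_comm z, real_inner_comm w] at hw hz hlip ⊢
  rw [abs_le]
  constructor <;> linarith

end IsMetricProjection

end MetricProjection

theorem stmt18_general (m k : ℕ) (γ : ℝ) (hγ : 0 < γ)
    (c : EuclideanSpace ℝ (Fin m))
    (C : Set (EuclideanSpace ℝ (Fin m)))
    (hC : C = {x : EuclideanSpace ℝ (Fin m) |
      (∑ i, x i ≤ γ) ∧ ∀ i, 0 ≤ x i ∧ x i ≤ (1 / (k : ℝ)) * ∑ j, x j})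
    (P : EuclideanSpace ℝ (Fin m) → EuclideanSpace ℝ (Fin m))
    (hP : ∀ z, P z ∈ C ∧ ∀ w ∈ C, dist z (P z) ≤ dist z w)
    (L : EuclideanSpace ℝ (Fin m) → ℝ)
    (hL : ∀ a, L a = (1 / γ) *
      ((inner ℝ (a + c) (P (a + c)) : ℝ)
        - (1 / 2) * (inner ℝ (P (a + c)) (P (a + c)) : ℝ))) :
    (∀ a, HasGradientAt L ((1 / γ) • P (a + c)) a) ∧
    LipschitzWith (1 / γ).toNNReal (fun a => (1 / γ) • P (a + c)) := by
  have hP : IsMetricProjection C P := hP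
  have hconv : Convex ℝ C := hC ▸ convex_topKSimplex γ (1 / (k : ℝ))
  have hL_eq : L = fun a => 1 / γ * projPotential P (a + c) := funext hL
  refine ⟨fun a => hasGradientAt_of_abs_sub_sub_inner_le |1 / γ| fun b => ?_, ?_⟩
  · have hb := hP.abs_projPotential_sub_sub_inner_le hconv (a + c) (b + c)
    rw [add_sub_add_right_eq_sub] at hb
    calc |L b - L a - ⟪(1 / γ) • P (a + c), b - a⟫|
        = |1 / γ| * |projPotential P (b + c) - projPotential P (a + c) - ⟪P (a + c), b - a⟫| := by
          rw [hL_eq, real_inner_smul_left, ← abs_mul, mul_sub, mul_sub]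
      _ ≤ |1 / γ| * ‖b - a‖ ^ 2 := by gcongr
  · have h := ((lipschitzWith_smul (1 / γ)).comp (hP.lipschitzWith_one hconv)).comp
      (isometry_add_right c).lipschitz
    rwa [mul_one, mul_one, ← Real.toNNReal_eq_nnnorm_of_nonneg (by positivity)] at h

/-- The smooth top-`k` hinge loss
`L_γ(a) = (1/γ)(⟨a+c, P(a+c)⟩ - (1/2)⟨P(a+c), P(a+c)⟩)`, where `P` is the
Euclidean projection onto the top-`k` simplex `Δ^α_k(γ)` of radius `γ`, is
differentiable with gradient `∇L_γ(a) = (1/γ) • P(a+c)`, and the gradient map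
is `(1/γ)`-Lipschitz. -/
theorem stmt18 (m k : ℕ) (hk : 0 < k) (γ : ℝ) (hγ : 0 < γ)
    (c : EuclideanSpace ℝ (Fin m))
    (C : Set (EuclideanSpace ℝ (Fin m)))
    (hC : C = {x : EuclideanSpace ℝ (Fin m) |
      (∑ i, x i ≤ γ) ∧ ∀ i, 0 ≤ x i ∧ x i ≤ (1 / (k : ℝ)) * ∑ j, x j})
    (P : EuclideanSpace ℝ (Fin m) → EuclideanSpace ℝ (Fin m))
    (hP : ∀ z, P z ∈ C ∧ ∀ w ∈ C, dist z (P z) ≤ dist z w)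
    (L : EuclideanSpace ℝ (Fin m) → ℝ)
    (hL : ∀ a, L a = (1 / γ) *
      ((inner ℝ (a + c) (P (a + c)) : ℝ)
        - (1 / 2) * (inner ℝ (P (a + c)) (P (a + c)) : ℝ))) :
    (∀ a, HasGradientAt L ((1 / γ) • P (a + c)) a) ∧
    LipschitzWith (1 / γ).toNNReal (fun a => (1 / γ) • P (a + c)) :=
  stmt18_general m k γ hγ c C hC P hP L hL
end
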